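/- There is no Type-n vector field on S²×S¹: if P₁, P₂, P₃, P₄ ∈ ℝ[x₁,x₂,x₃,x₄] are homogeneous polynomials of the same degree n and χ = (P₁,P₂,P₃,P₄) is a vector field on S²×S¹, then P₄ = 0. In particular, there is no vector field on S²×S¹ all four of whose components are nonzero homogeneous polynomials of degree n. -/

import Mathlib

/-!
Substituting `x ↦ t • x` turns `χ G_b = K G_b` into an identity in `t`: with `s = x₁² + x₂² + x₃²`
and `Q = x₁P₁ + x₂P₂ + x₃P₃`, the left side becomes `t^(n+1) (4sQ t² + (2x₄P₄ - 4b²Q))`, while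
`G_b(t • x)` has constant term `b⁴ - 1 ≠ 0` and degree `4` in `t`. Since `t` is prime and does not
divide `G_b(t • x)`, `t^(n+1)` divides `K(t • x)`; after cancelling it, the quadratic bracket is a
multiple of a quartic, hence zero. So `sQ = 0`, i.e. `Q = 0`, and then `x₄P₄ = 0`.
-/

open MvPolynomial

/-- The action of the polynomial vector field `χ = (P 0, P 1, P 2, P 3)` on a polynomial:
`χf = Σᵢ Pᵢ ∂f/∂xᵢ`. -/
noncomputable def chi (P : Fin 4 → MvPolynomial (Fin 4) ℝ)
    (f : MvPolynomial (Fin 4) ℝ) : MvPolynomial (Fin 4) ℝ :=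
  ∑ i, P i * pderiv i f

/-- `G_b = (x₁² + x₂² + x₃² - b²)² + x₄² - 1`, whose zero set is `S² × S¹`. -/
noncomputable def Gb (b : ℝ) : MvPolynomial (Fin 4) ℝ :=
  (X 0 ^ 2 + X 1 ^ 2 + X 2 ^ 2 - C (b ^ 2)) ^ 2 + X 3 ^ 2 - 1

namespace MvPolynomial

variable {σ R : Type*} [CommRing R]

/-- The substitution `f(x) ↦ f(t • x)`, with values in polynomials in `t`. -/
noncomputable def scaleVars : MvPolynomial σ R →ₐ[R] Polynomial (MvPolynomial σ R) :=
  aeval fun i => Polynomial.C (X i) * Polynomial.X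

theorem scaleVars_monomial (d : σ →₀ ℕ) (c : R) :
    scaleVars (monomial d c) = Polynomial.C (monomial d c) * Polynomial.X ^ d.degree := by
  rw [scaleVars, aeval_monomial, monomial_eq, Finsupp.prod, Finsupp.prod]
  simp_rw [mul_pow, ← Polynomial.C_pow]
  rw [Finset.prod_mul_distrib, ← map_prod, Finset.prod_pow_eq_pow_sum, Finsupp.degree_apply,
    map_mul, Polynomial.algebraMap_apply, algebraMap_eq, mul_assoc]

@[simp]
theorem scaleVars_X (i : σ) :
    scaleVars (X i : MvPolynomial σ R) = Polynomial.C (X i) * Polynomial.X :=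
  aeval_X _ i

@[simp]
theorem scaleVars_C (c : R) : scaleVars (C c : MvPolynomial σ R) = Polynomial.C (C c) :=
  scaleVars.commutes c

theorem scaleVars_of_isHomogeneous {f : MvPolynomial σ R} {m : ℕ} (hf : f.IsHomogeneous m) :
    scaleVars f = Polynomial.C f * Polynomial.X ^ m := by
  conv_lhs => rw [f.as_sum]
  conv_rhs => rw [f.as_sum]
  simp only [map_sum, Finset.sum_mul]
  refine Finset.sum_congr rfl fun d hd => ?_
  rw [scaleVars_monomial]
  congr 2
  rw [Finsupp.degree_eq_weight_one]
  exact hf (mem_support_iff.mp hd)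

end MvPolynomial

namespace Polynomial

variable {R : Type*} [CommRing R] [IsDomain R]

theorem eq_zero_of_X_pow_mul_eq_mul {a : ℕ} {h k g : R[X]} (hg : g.coeff 0 ≠ 0)
    (hdeg : h.natDegree < g.natDegree) (H : X ^ a * h = k * g) : h = 0 := by
  obtain ⟨k', rfl⟩ : X ^ a ∣ k :=
    prime_X.pow_dvd_of_dvd_mul_right a (mt X_dvd_iff.mp hg) ⟨h, H.symm⟩
  rw [mul_assoc, mul_right_inj' (pow_ne_zero a X_ne_zero)] at H
  subst H
  rcases eq_or_ne k' 0 with rfl | hk'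
  · exact zero_mul g
  · rw [natDegree_mul hk' (by rintro rfl; simp at hg)] at hdeg
    omega

theorem C_mul_X_pow_add_C_eq_zero_iff {S : Type*} [Semiring S] {k : ℕ} (hk : k ≠ 0) {a b : S} :
    C a * X ^ k + C b = 0 ↔ a = 0 ∧ b = 0 := by
  refine ⟨fun H => ⟨?_, ?_⟩, fun ⟨ha, hb⟩ => by simp [ha, hb]⟩
  · simpa [coeff_C, hk] using congrArg (coeff · k) H
  · simpa [coeff_C, hk.symm] using congrArg (coeff · 0) H

end Polynomial

theorem chi_Gb_eq (b : ℝ) (P : Fin 4 → MvPolynomial (Fin 4) ℝ) :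
    chi P (Gb b) = 4 * (X 0 ^ 2 + X 1 ^ 2 + X 2 ^ 2 - C (b ^ 2))
      * (X 0 * P 0 + X 1 * P 1 + X 2 * P 2) + 2 * X 3 * P 3 := by
  simp only [chi, Gb, Fin.sum_univ_four, Fin.isValue, C_pow, map_sub, map_add,
    Derivation.leibniz_pow, Nat.add_one_sub_one, pow_one, pderiv_X, smul_eq_mul, nsmul_eq_mul,
    Nat.cast_ofNat, derivation_C, mul_zero, sub_zero, Derivation.map_one_eq_zero,
    Pi.single_eq_same, mul_one, ne_eq, one_ne_zero, not_false_eq_true, Pi.single_eq_of_ne,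
    add_zero, Fin.reduceEq, zero_ne_one, zero_add]
  ring

theorem sum_sq_X_ne_zero : (X 0 ^ 2 + X 1 ^ 2 + X 2 ^ 2 : MvPolynomial (Fin 4) ℝ) ≠ 0 := by
  intro h
  have := congrArg (eval fun _ => 1) h
  norm_num at this

theorem apply_three_eq_zero_of_chi_Gb_eq_mul {b : ℝ} (hb : 1 < b) {n : ℕ}
    {P : Fin 4 → MvPolynomial (Fin 4) ℝ} (hP : ∀ i, (P i).IsHomogeneous n)
    {K : MvPolynomial (Fin 4) ℝ} (hK : chi P (Gb b) = K * Gb b) : P 3 = 0 := by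
  set s : MvPolynomial (Fin 4) ℝ := X 0 ^ 2 + X 1 ^ 2 + X 2 ^ 2
  set Q : MvPolynomial (Fin 4) ℝ := X 0 * P 0 + X 1 * P 1 + X 2 * P 2
  have hs : s ≠ 0 := sum_sq_X_ne_zero
  set h : Polynomial (MvPolynomial (Fin 4) ℝ) :=
    Polynomial.C (4 * s * Q) * Polynomial.X ^ 2 + Polynomial.C (2 * X 3 * P 3 - 4 * C (b ^ 2) * Q)
  set g : Polynomial (MvPolynomial (Fin 4) ℝ) := Polynomial.C (s ^ 2) * Polynomial.X ^ 4
    + Polynomial.C (X 3 ^ 2 - 2 * C (b ^ 2) * s) * Polynomial.X ^ 2 + Polynomial.C (C (b ^ 2) ^ 2 - 1)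
  have hscaled : Polynomial.X ^ (n + 1) * h = scaleVars K * g := by
    have hK' : 4 * (s - C (b ^ 2)) * Q + 2 * X 3 * P 3 =
        K * ((s - C (b ^ 2)) ^ 2 + X 3 ^ 2 - 1) := by
      rw [← chi_Gb_eq, hK, Gb]
    have := congrArg scaleVars hK'
    simp only [h, g, s, Q, map_add, map_sub, map_mul, map_pow, map_one, map_ofNat, scaleVars_X,
      scaleVars_C, scaleVars_of_isHomogeneous (hP _)] at this ⊢
    linear_combination this
  have hg0 : g.coeff 0 ≠ 0 := by
    simp only [g, Polynomial.coeff_add, Polynomial.coeff_C_mul_X_pow, Polynomial.coeff_C_zero,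
      OfNat.zero_ne_ofNat, if_false, zero_add]
    rw [← map_pow, ← map_one C, ← map_sub, ne_eq, C_eq_zero]
    exact sub_ne_zero.mpr (one_lt_pow₀ (one_lt_pow₀ hb two_ne_zero) two_ne_zero).ne'
  have hdeg : h.natDegree < g.natDegree := by
    have hh : h.natDegree ≤ 2 := by simp only [h]; compute_degree
    have hg : 4 ≤ g.natDegree := Polynomial.le_natDegree_of_ne_zero (by
      simp only [g, Polynomial.coeff_add, Polynomial.coeff_C_mul_X_pow, Polynomial.coeff_C]
      simpa using hs)
    omega
  obtain ⟨hlead, hconst⟩ := (Polynomial.C_mul_X_pow_add_C_eq_zero_iff two_ne_zero).mp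
    (Polynomial.eq_zero_of_X_pow_mul_eq_mul hg0 hdeg hscaled)
  have hQ : Q = 0 := by simpa [hs] using hlead
  simpa [hQ] using hconst

theorem stmt_16 (b : ℝ) (hb : 1 < b) (n : ℕ) :
    (∀ P : Fin 4 → MvPolynomial (Fin 4) ℝ, (∀ i, (P i).IsHomogeneous n) →
      (∃ K : MvPolynomial (Fin 4) ℝ, chi P (Gb b) = K * Gb b) → P 3 = 0) ∧
    ¬ ∃ P : Fin 4 → MvPolynomial (Fin 4) ℝ,
      (∀ i, (P i).IsHomogeneous n) ∧ (∀ i, P i ≠ 0) ∧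
      ∃ K : MvPolynomial (Fin 4) ℝ, chi P (Gb b) = K * Gb b := by
  refine ⟨fun P hP ⟨K, hK⟩ => apply_three_eq_zero_of_chi_Gb_eq_mul hb hP hK, ?_⟩
  rintro ⟨P, hP, hne, K, hK⟩
  exact hne 3 (apply_three_eq_zero_of_chi_Gb_eq_mul hb hP hK)
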